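/- arXiv:2305.00198 — 3 statements merged into one kernel-verified Lean document; each statement's English description precedes it below -/
import Mathlib

section
/- For every k ≥ 1, the n-th coordinate polynomial of X^k has degree at most n - k when n ≥ k, and equals the zero polynomial when n < k, whenever X ∈ Q has n-th coordinate of degree at most n-1 for all n. -/
open Polynomial

noncomputable section

/-- The underlying set of the algebra `Q`: infinite sequences of real polynomials. -/
abbrev PolySeq : Type := ℕ → Polynomial ℝ

/-- Multiplication in the algebra `Q`: `(qmul P Q)_k = ∑_{j ≤ deg Q_k} [Q_k]_j • P_j`. -/
def qmul (P Q : PolySeq) : PolySeq := fun k => (Q k).sum fun j c => c • P j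

/-- The identity `E = (1, x, x², …)`. -/
def Eseq : PolySeq := fun n => X ^ n

/-- `D = (0, 1, x, x², …)`. -/
def Dseq : PolySeq := fun n => if n = 0 then 0 else X ^ (n - 1)

/-- `F = (x, x², x³, …)`. -/
def Fseq : PolySeq := fun n => X ^ (n + 1)

/-- Powers in the algebra `Q`. -/
def qpow (P : PolySeq) : ℕ → PolySeq
  | 0 => Eseq
  | k + 1 => qmul P (qpow P k)

/-- The `q`-number `[n]_q = 1 + q + … + q^{n-1}`, with `[0]_q = 0`. -/
def qnum (q : ℝ) (n : ℕ) : ℝ := ∑ i ∈ Finset.range n, q ^ i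

/-- The q-derivative element `D_q = ([0]_q, [1]_q, [2]_q x, [3]_q x², …)`. -/
def Dq (q : ℝ) : PolySeq := fun n => C (qnum q n) * X ^ (n - 1)

lemma wb_lt_succ {a : WithBot ℕ} {m : ℕ} (h : a < ((m+1 : ℕ) : WithBot ℕ)) :
    a ≤ (m : WithBot ℕ) := by
  cases a with
  | bot => exact bot_le
  | coe n =>
    rw [Nat.cast_withBot] at h ⊢
    exact WithBot.coe_le_coe.mpr (Nat.lt_succ_iff.mp (WithBot.coe_lt_coe.mp h))

/-- For `k ≥ 1`, the `n`-th coordinate of `Xs^k` vanishes for `n < k` and has degree at most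
`n - k` for `n ≥ k`, whenever each `Xs_n` has degree at most `n - 1`. -/
theorem stmt3 (Xs : PolySeq) (h : ∀ n, (Xs n).degree < (n : WithBot ℕ)) :
    ∀ k, 1 ≤ k → ∀ n,
      (n < k → qpow Xs k n = 0) ∧
      (k ≤ n → (qpow Xs k n).degree ≤ ((n - k : ℕ) : WithBot ℕ)) := by
  have hX0 : Xs 0 = 0 := by
    have := h 0
    exact degree_eq_bot.mp (Nat.WithBot.lt_zero_iff.mp (by exact_mod_cast this))
  have hbase : ∀ n, qpow Xs 1 n = Xs n := by
    intro n
    show (Eseq n).sum (fun j c => c • Xs j) = Xs n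
    rw [Eseq, X_pow_eq_monomial, sum_monomial_index _ _ (by simp)]
    simp
  intro k hk
  induction k with
  | zero => omega
  | succ k ih =>
    rcases Nat.eq_zero_or_pos k with rfl | hk1
    · intro n
      constructor
      · intro hn
        interval_cases n
        rw [hbase]; exact hX0
      · intro hn
        rw [hbase]
        have := h n
        have : (Xs n).degree < (((n-1)+1 : ℕ) : WithBot ℕ) := by
          rwa [Nat.sub_add_cancel hn]
        exact wb_lt_succ this
    · have IH := ih hk1
      intro n
      have hrfl : qpow Xs (k+1) n = (qpow Xs k n).sum fun j c => c • Xs j := rfl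
      constructor
      · intro hn
        rw [hrfl]
        rcases Nat.lt_or_ge n k with hnk | hnk
        · rw [(IH n).1 hnk]; exact sum_zero_index _
        · have hnk : n = k := by omega
          subst hnk
          have hdeg : (qpow Xs n n).degree ≤ ((n - n : ℕ) : WithBot ℕ) := (IH n).2 le_rfl
          rw [Nat.sub_self] at hdeg
          obtain ⟨a, ha⟩ : ∃ a, qpow Xs n n = C a :=
            ⟨_, eq_C_of_degree_le_zero (by exact_mod_cast hdeg)⟩
          rw [ha, sum_C_index (by simp)]
          rw [hX0]; simp
      · intro hn
        rw [hrfl]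
        refine (degree_sum_le _ _).trans ?_
        apply Finset.sup_le
        intro j hj
        have hjle : (j : WithBot ℕ) ≤ ((n - k : ℕ) : WithBot ℕ) :=
          (le_degree_of_ne_zero (mem_support_iff.mp hj)).trans ((IH n).2 (by omega))
        have hjle' : j ≤ n - k := by exact_mod_cast hjle
        have : (Xs j).degree < ((n - k : ℕ) : WithBot ℕ) :=
          lt_of_lt_of_le (h j) (by exact_mod_cast hjle')
        have h2 : (Xs j).degree ≤ ((n - (k+1) : ℕ) : WithBot ℕ) := by
          apply wb_lt_succ
          rwa [show n - (k+1) + 1 = n - k by omega]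
        exact (degree_smul_le _ _).trans h2
end
end

section
/- In the algebra Q of polynomial sequences, for q ∈ [-1,1], the identity D_q F² D_q = F D_q² F holds. -/
open Polynomial

noncomputable section

/-- `D_q²`. -/
def Dq2 (q : ℝ) : PolySeq := qmul (Dq q) (Dq q)

/-- `W₁ = E + β D_q F D_q`. -/
def W1 (β q : ℝ) : PolySeq := Eseq + β • qmul (qmul (Dq q) Fseq) (Dq q)

/-- `W₂ = E + β F D_q²`. -/
def W2 (β q : ℝ) : PolySeq := Eseq + β • qmul Fseq (Dq2 q)

/-- `W₃ = E + qβ F D_q²`. -/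
def W3 (β q : ℝ) : PolySeq := Eseq + (q * β) • qmul Fseq (Dq2 q)

/-- `W₄ = E + β D_q² F`. -/
def W4 (β q : ℝ) : PolySeq := Eseq + β • qmul (Dq2 q) Fseq

/-- `R = (W₁ + γ D_q) W₂ + α D_q²`. -/
def RelQ (α β γ q : ℝ) : PolySeq := qmul (W1 β q + γ • Dq q) (W2 β q) + α • Dq2 q

/-- `Q' = (1-q) D_q W₂ - β D_q²`. -/
def Qel (β q : ℝ) : PolySeq := (1 - q) • qmul (Dq q) (W2 β q) - β • Dq2 q

/-- `S(z) = R + z (D - Q')`. -/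
def Sel (α β γ q z : ℝ) : PolySeq := RelQ α β γ q + z • (Dseq - Qel β q)


lemma sum_CXpow (P : PolySeq) (a : ℝ) (m : ℕ) :
    ((C a * X ^ m).sum fun j c => c • P j) = a • P m := by
  rw [C_mul_X_pow_eq_monomial, Polynomial.sum_monomial_index]
  exact zero_smul _ _

lemma sum_Xpow (P : PolySeq) (m : ℕ) :
    ((X ^ m : Polynomial ℝ).sum fun j c => c • P j) = P m := by
  have := sum_CXpow P 1 m
  simpa using this

lemma DqF_eq (q : ℝ) : qmul (Dq q) Fseq = fun k => C (qnum q (k + 1)) * X ^ k := by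
  funext k
  show ((Fseq k).sum fun j c => c • Dq q j) = _
  simp only [Fseq, Dq, sum_Xpow, Nat.add_sub_cancel]

lemma DqFF_eq (q : ℝ) :
    qmul (qmul (Dq q) Fseq) Fseq = fun k => C (qnum q (k + 2)) * X ^ (k + 1) := by
  funext k
  show ((Fseq k).sum fun j c => c • qmul (Dq q) Fseq j) = _
  simp only [Fseq, DqF_eq, sum_Xpow]

lemma Dq2_eq (q : ℝ) :
    Dq2 q = fun k => C (qnum q k * qnum q (k - 1)) * X ^ (k - 1 - 1) := by
  funext k
  show ((Dq q k).sum fun j c => c • Dq q j) = _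
  simp only [Dq]
  rw [sum_CXpow, Polynomial.smul_eq_C_mul, ← mul_assoc, ← C_mul]

lemma FDq2_eq (q : ℝ) :
    qmul Fseq (Dq2 q) = fun k => C (qnum q k * qnum q (k - 1)) * X ^ (k - 1 - 1 + 1) := by
  funext k
  show ((Dq2 q k).sum fun j c => c • Fseq j) = _
  simp only [Dq2_eq, Fseq]
  rw [sum_CXpow, Polynomial.smul_eq_C_mul]

/-- `D_q F² D_q = F D_q² F`. -/
theorem stmt12 (q : ℝ) (hq : q ∈ Set.Icc (-1 : ℝ) 1) :
    qmul (qmul (qmul (Dq q) Fseq) Fseq) (Dq q) =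
      qmul (qmul Fseq (Dq2 q)) Fseq := by
  funext n
  have hL : qmul (qmul (qmul (Dq q) Fseq) Fseq) (Dq q) n
      = qnum q n • (C (qnum q (n - 1 + 2)) * X ^ (n - 1 + 1)) := by
    show ((Dq q n).sum fun j c => c • qmul (qmul (Dq q) Fseq) Fseq j) = _
    simp only [DqFF_eq, Dq]
    rw [sum_CXpow]
  have hR : qmul (qmul Fseq (Dq2 q)) Fseq n
      = C (qnum q (n + 1) * qnum q n) * X ^ (n + 1 - 1 - 1 + 1) := by
    show ((Fseq n).sum fun j c => c • qmul Fseq (Dq2 q) j) = _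
    simp only [FDq2_eq, Fseq]
    rw [sum_Xpow]
    simp only [Nat.add_sub_cancel]
  rw [hL, hR]
  cases n with
  | zero => simp [qnum]
  | succ k =>
      simp only [Nat.add_sub_cancel, Nat.succ_sub_one]
      rw [Polynomial.smul_eq_C_mul, ← mul_assoc, ← C_mul, mul_comm (qnum q (k + 1))]
end
end

section
/- Let β ∈ ℝ, q ∈ [-1,1], W_1 = E + β D_q F D_q, W_2 = E + β F D_q², W_3 = E + qβ F D_q² in the algebra Q. Then W_2 W_3 = W_1 (W_2 - β D_q). -/
open Polynomial

noncomputable section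

lemma app_add (P : PolySeq) (p r : Polynomial ℝ) :
    ((p + r).sum fun j c => c • P j) = (p.sum fun j c => c • P j) + (r.sum fun j c => c • P j) :=
  Polynomial.sum_add_index p r _ (fun i => zero_smul ℝ (P i)) (fun i b c => add_smul b c (P i))

lemma app_CX (P : PolySeq) (a : ℝ) (n : ℕ) :
    ((C a * X ^ n).sum fun j c => c • P j) = a • P n := by
  rw [C_mul_X_pow_eq_monomial, Polynomial.sum_monomial_index]
  exact zero_smul ℝ (P n)

lemma app_Xpow (P : PolySeq) (n : ℕ) :
    (((X : Polynomial ℝ) ^ n).sum fun j c => c • P j) = P n := by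
  have := app_CX P 1 n; simpa using this

lemma app_smul (P : PolySeq) (a : ℝ) (p : Polynomial ℝ) :
    ((a • p).sum fun j c => c • P j) = a • (p.sum fun j c => c • P j) := by
  rw [Polynomial.sum_smul_index p a _ (fun i => zero_smul ℝ (P i))]
  simp [Polynomial.sum, mul_smul, Finset.smul_sum]

lemma app_sub (P : PolySeq) (p r : Polynomial ℝ) :
    ((p - r).sum fun j c => c • P j) = (p.sum fun j c => c • P j) - (r.sum fun j c => c • P j) := by
  have h := app_add P (p - r) r
  rw [sub_add_cancel] at h
  rw [h]; ring

lemma qnum_zero (q : ℝ) : qnum q 0 = 0 := by simp [qnum]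

lemma qnum_succ (q : ℝ) (n : ℕ) : qnum q (n + 1) = 1 + q * qnum q n := by
  simp [qnum, geom_sum_succ]; ring

lemma Dq2_eval (q : ℝ) (n : ℕ) :
    Dq2 q (n + 1) = C (qnum q (n + 1) * qnum q n) * X ^ (n - 1) := by
  simp only [Dq2, qmul, Dq, Nat.add_sub_cancel, app_CX]
  rw [Polynomial.smul_eq_C_mul, map_mul]
  ring

lemma FDq2_eval (q : ℝ) (n : ℕ) :
    qmul Fseq (Dq2 q) (n + 1) = C (qnum q (n + 1) * qnum q n) * X ^ n := by
  conv_lhs => rw [qmul]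
  rw [Dq2_eval, app_CX]
  cases n with
  | zero => simp [qnum_zero]
  | succ m => simp [Fseq, Polynomial.smul_eq_C_mul]

lemma W2_eval (β q : ℝ) (n : ℕ) :
    W2 β q (n + 1) = X ^ (n + 1) + C (β * (qnum q (n + 1) * qnum q n)) * X ^ n := by
  simp only [W2, Pi.add_apply, Pi.smul_apply, Eseq]
  rw [FDq2_eval, Polynomial.smul_eq_C_mul, map_mul]
  simp only [map_mul]
  ring

lemma W3_eval (β q : ℝ) (n : ℕ) :
    W3 β q (n + 1) = X ^ (n + 1) + C (q * β * (qnum q (n + 1) * qnum q n)) * X ^ n := by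
  simp only [W3, Pi.add_apply, Pi.smul_apply, Eseq]
  rw [FDq2_eval, Polynomial.smul_eq_C_mul, map_mul]
  simp only [map_mul]
  ring

lemma DqF_eval (q : ℝ) (n : ℕ) :
    qmul (Dq q) Fseq n = C (qnum q (n + 1)) * X ^ n := by
  simp [qmul, Fseq, app_Xpow, Dq]

lemma DqFDq_eval (q : ℝ) (n : ℕ) :
    qmul (qmul (Dq q) Fseq) (Dq q) (n + 1) = C (qnum q (n + 1) * qnum q (n + 1)) * X ^ n := by
  conv_lhs => rw [qmul]
  rw [show Dq q (n + 1) = C (qnum q (n + 1)) * X ^ n from rfl]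
  rw [app_CX, DqF_eval, Polynomial.smul_eq_C_mul, map_mul]
  ring

lemma Dq_zero (q : ℝ) : Dq q 0 = 0 := by simp [Dq, qnum_zero]

lemma app_one (P : PolySeq) : ((1 : Polynomial ℝ).sum fun j c => c • P j) = P 0 := by
  simpa using app_Xpow P 0

lemma FDq2_zero (q : ℝ) : qmul Fseq (Dq2 q) 0 = 0 := by
  simp [qmul, Dq2, Dq_zero, Polynomial.sum_zero_index]

lemma DqFDq_zero (q : ℝ) : qmul (qmul (Dq q) Fseq) (Dq q) 0 = 0 := by
  simp [qmul, Dq_zero, Polynomial.sum_zero_index]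

lemma W2_zero (β q : ℝ) : W2 β q 0 = 1 := by
  simp [W2, Eseq, FDq2_zero]

lemma W3_zero (β q : ℝ) : W3 β q 0 = 1 := by
  simp [W3, Eseq, FDq2_zero]

lemma W1_zero (β q : ℝ) : W1 β q 0 = 1 := by
  simp [W1, Eseq, DqFDq_zero]

lemma W1_eval (β q : ℝ) (n : ℕ) :
    W1 β q (n + 1) = X ^ (n + 1) + C (β * (qnum q (n + 1) * qnum q (n + 1))) * X ^ n := by
  simp only [W1, Pi.add_apply, Pi.smul_apply, Eseq]
  rw [DqFDq_eval, Polynomial.smul_eq_C_mul, map_mul]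
  simp only [map_mul]
  ring


/-- `W₂ W₃ = W₁ (W₂ - β D_q)`. -/
theorem stmt13 (β q : ℝ) (hq : q ∈ Set.Icc (-1 : ℝ) 1) :
    qmul (W2 β q) (W3 β q) = qmul (W1 β q) (W2 β q - β • Dq q) := by
  funext k
  obtain _ | n := k
  · simp only [qmul, Pi.sub_apply, Pi.smul_apply, W3_zero, W2_zero, W1_zero, Dq_zero,
      smul_zero, sub_zero, app_one]
  · obtain _ | m := n
    · -- k = 1
      simp only [qmul]
      rw [W3_eval, app_add, app_Xpow, app_CX]
      simp only [Pi.sub_apply, Pi.smul_apply]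
      rw [W2_eval β q 0, app_sub, app_add, app_Xpow, app_CX, app_smul]
      rw [show Dq q 1 = C (qnum q 1) * X ^ 0 from rfl, app_CX]
      rw [W2_zero, W1_zero, W1_eval β q 0]
      rw [qnum_succ q 0, qnum_zero]
      simp only [Polynomial.smul_eq_C_mul, map_mul, map_add, map_one, map_zero]
      ring
    · -- k = m + 2
      simp only [qmul]
      rw [W3_eval, app_add, app_Xpow, app_CX]
      simp only [Pi.sub_apply, Pi.smul_apply]
      rw [W2_eval β q (m + 1), app_sub, app_add, app_Xpow, app_CX, app_smul]
      rw [show Dq q (m + 2) = C (qnum q (m + 2)) * X ^ (m + 1) from rfl, app_CX]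
      rw [W2_eval β q m, W1_eval β q (m + 1), W1_eval β q m]
      rw [qnum_succ q (m + 1), qnum_succ q m]
      simp only [Polynomial.smul_eq_C_mul, map_mul, map_add, map_one]
      ring
end
end
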